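/- Let G be a connected finite simple graph in which every vertex has degree 1 or 3, with bipartition classes X and Y. If G admits an in-out-proper orientation with all in-out-degrees of absolute value at most 2, then G admits an orientation in which every vertex of X has in-out-degree 1 and every vertex of Y has in-out-degree -1 (or vice versa). -/

import Mathlib

/-!
Every degree is odd, so `d^±(v) = deg v - 2 d^+(v)` is odd and the bound `|d^±| ≤ 2` forces
`d^±(v) = ±1`. Properness then makes `v ↦ (d^±(v) = 1)` a proper 2-colouring of `G`; on a
connected graph any two proper 2-colourings agree or are complementary, so the given
orientation already has in-out-degree `1` on one bipartition class and `-1` on the other.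
-/

/-- An orientation of a simple graph `G`: for each edge `{u,v}` exactly one of the
two directions is chosen. `dir u v = true` means the arc goes from `u` to `v`. -/
structure Orient {V : Type*} (G : SimpleGraph V) where
  dir : V → V → Bool
  consistent : ∀ u v, G.Adj u v → dir u v = !dir v u

variable {V : Type*}

/-- In-degree of `v` in the orientation `D`. -/
def inDeg [Fintype V] (G : SimpleGraph V) [DecidableRel G.Adj] (D : Orient G) (v : V) : ℕ :=
  (Finset.univ.filter (fun u => G.Adj u v ∧ D.dir u v = true)).card

/-- Out-degree of `v` in the orientation `D`. -/
def outDeg [Fintype V] (G : SimpleGraph V) [DecidableRel G.Adj] (D : Orient G) (v : V) : ℕ :=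
  (Finset.univ.filter (fun u => G.Adj u v ∧ D.dir v u = true)).card

/-- In-out-degree `d_D^±(v) = d_D^-(v) - d_D^+(v)`. -/
def ioDeg [Fintype V] (G : SimpleGraph V) [DecidableRel G.Adj] (D : Orient G) (v : V) : ℤ :=
  (inDeg G D v : ℤ) - (outDeg G D v : ℤ)

/-- An orientation is in-out-proper if adjacent vertices have distinct in-out-degrees. -/
def IsIOProper [Fintype V] (G : SimpleGraph V) [DecidableRel G.Adj] (D : Orient G) : Prop :=
  ∀ u v, G.Adj u v → ioDeg G D u ≠ ioDeg G D v

namespace SimpleGraph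

variable {G : SimpleGraph V}

theorem Preconnected.apply_eq_of_forall_adj {α : Type*} (hG : G.Preconnected) {f : V → α}
    (hf : ∀ u v, G.Adj u v → f u = f v) (u v : V) : f u = f v := by
  obtain ⟨w⟩ := hG u v
  induction w with
  | nil => rfl
  | cons h _ ih => exact (hf _ _ h).trans ih

theorem Preconnected.forall_iff_or_forall_iff_not (hG : G.Preconnected) {p q : V → Prop}
    (hp : ∀ u v, G.Adj u v → (p u ↔ ¬ p v)) (hq : ∀ u v, G.Adj u v → (q u ↔ ¬ q v)) :
    (∀ v, p v ↔ q v) ∨ (∀ v, p v ↔ ¬ q v) := by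
  have hconst := hG.apply_eq_of_forall_adj (f := fun v => (p v ↔ q v)) fun u v h =>
    propext (by have := hp u v h; have := hq u v h; tauto)
  refine or_iff_not_imp_left.mpr fun h v => ?_
  obtain ⟨v₀, hv₀⟩ := not_forall.mp h
  have : ¬ (p v ↔ q v) := hconst v₀ v ▸ hv₀
  tauto

end SimpleGraph

section Orient

variable [Fintype V] {G : SimpleGraph V} [DecidableRel G.Adj] (D : Orient G) (v : V)

theorem inDeg_add_outDeg : inDeg G D v + outDeg G D v = G.degree v := by
  rw [← G.card_neighborFinset_eq_degree,
    ← Finset.card_filter_add_card_filter_not (s := G.neighborFinset v)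
      (fun u => D.dir u v = true)]
  unfold inDeg outDeg
  congr 2 <;> ext u
  · simp [SimpleGraph.adj_comm]
  · simp only [Finset.mem_filter, Finset.mem_univ, true_and, SimpleGraph.mem_neighborFinset,
      G.adj_comm v u]
    refine and_congr_right fun h => ?_
    rw [D.consistent u v h]
    simp

theorem ioDeg_eq_degree_sub_two_mul_outDeg :
    ioDeg G D v = G.degree v - 2 * outDeg G D v := by
  rw [ioDeg, ← inDeg_add_outDeg D v]
  push_cast
  ring

theorem ioDeg_eq_one_or_neg_one (hodd : Odd (G.degree v)) (hbd : |ioDeg G D v| ≤ 2) :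
    ioDeg G D v = 1 ∨ ioDeg G D v = -1 := by
  obtain ⟨k, hk⟩ := hodd
  have h := ioDeg_eq_degree_sub_two_mul_outDeg D v
  rw [hk] at h
  push_cast at h
  rw [abs_le] at hbd
  omega

end Orient

/-- A connected bipartite graph with degrees in `{1,3}` that has an in-out-proper
orientation with `|d^±| ≤ 2` has an orientation in which one bipartition class gets
in-out-degree `1` and the other `-1` (or vice versa). -/
theorem stmt_12 [Fintype V] (G : SimpleGraph V) [DecidableRel G.Adj]
    (hconn : G.Connected)
    (hdeg : ∀ v, G.degree v = 1 ∨ G.degree v = 3)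
    (X : Set V) (hX : ∀ u v, G.Adj u v → (u ∈ X ↔ v ∉ X))
    (hex : ∃ D : Orient G, IsIOProper G D ∧ ∀ v, |ioDeg G D v| ≤ 2) :
    ∃ D' : Orient G,
      ((∀ v ∈ X, ioDeg G D' v = 1) ∧ (∀ v ∉ X, ioDeg G D' v = -1)) ∨
      ((∀ v ∈ X, ioDeg G D' v = -1) ∧ (∀ v ∉ X, ioDeg G D' v = 1)) := by
  obtain ⟨D, hproper, hbd⟩ := hex
  have hval (v : V) : ioDeg G D v = 1 ∨ ioDeg G D v = -1 :=
    ioDeg_eq_one_or_neg_one D v (by rcases hdeg v with h | h <;> rw [h] <;> decide) (hbd v)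
  have hflip (u v : V) (h : G.Adj u v) : ioDeg G D u = 1 ↔ ¬ ioDeg G D v = 1 := by
    have := hproper u v h
    rcases hval u with hu | hu <;> rcases hval v with hv | hv <;> simp_all
  refine ⟨D, ?_⟩
  rcases hconn.preconnected.forall_iff_or_forall_iff_not hflip hX with hsame | hopp
  · exact .inl ⟨fun v hv => (hsame v).mpr hv,
      fun v hv => (hval v).resolve_left (mt (hsame v).mp hv)⟩
  · exact .inr ⟨fun v hv => (hval v).resolve_left fun h => (hopp v).mp h hv,
      fun v hv => (hopp v).mpr hv⟩
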